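/- On U = {(x,y) ∈ ℝ² : y > 0}, the vector fields X₁ = (1,0), X₂ = (2x,y), X₃ = (x²,xy) (the class I₅, sl(2) of type III) are Hamiltonian with respect to the symplectic form ω = y^{−3} dx∧dy with Hamiltonian functions h₁ = −1/(2y²), h₂ = −x/y², h₃ = −x²/(2y²), respectively (i.e. ∂h_i/∂x = −y^{−3}·X_i² and ∂h_i/∂y = y^{−3}·X_i¹). Moreover, under the Poisson bracket {g,h}_ω = y³(∂g/∂x·∂h/∂y − ∂g/∂y·∂h/∂x) these satisfy {h₁,h₂}_ω = −2h₁, {h₁,h₃}_ω = −h₂, {h₂,h₃}_ω = −2h₃, so ⟨h₁,h₂,h₃⟩ is a Lie algebra isomorphic to sl(2). -/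

import Mathlib

namespace Stmt10

/-- Partial derivative in the x-direction. -/
noncomputable def pdx (f : ℝ × ℝ → ℝ) (p : ℝ × ℝ) : ℝ := fderiv ℝ f p (1, 0)

/-- Partial derivative in the y-direction. -/
noncomputable def pdy (f : ℝ × ℝ → ℝ) (p : ℝ × ℝ) : ℝ := fderiv ℝ f p (0, 1)

/-- Poisson bracket induced by ω = y⁻³ dx∧dy. -/
noncomputable def pbw (g h : ℝ × ℝ → ℝ) (p : ℝ × ℝ) : ℝ :=
  p.2 ^ 3 * (pdx g p * pdy h p - pdy g p * pdx h p)

/-- Domain: {y > 0}. -/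
def U : Set (ℝ × ℝ) := {p | p.2 > 0}

/-- Basis of the class I₅, sl(2) of type III. -/
def X1 : ℝ × ℝ → ℝ × ℝ := fun _ => (1, 0)
def X2 : ℝ × ℝ → ℝ × ℝ := fun p => (2 * p.1, p.2)
def X3 : ℝ × ℝ → ℝ × ℝ := fun p => (p.1 ^ 2, p.1 * p.2)

noncomputable def h1 : ℝ × ℝ → ℝ := fun p => -(1 / (2 * p.2 ^ 2))
noncomputable def h2 : ℝ × ℝ → ℝ := fun p => -(p.1 / p.2 ^ 2)
noncomputable def h3 : ℝ × ℝ → ℝ := fun p => -(p.1 ^ 2 / (2 * p.2 ^ 2))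

/-!
Each hᵢ has the shape h_P(x, y) = -P(x) / (2y²) with P = 1, 2x, x², and Xᵢ = (P, P'·y/2).
For such functions ∂ₓh_P = -y⁻³·(P'·y/2) and ∂_y h_P = y⁻³·P, and the bracket is
{h_P, h_Q}_ω = h_{P'Q - PQ'}. The sl(2) relations thus reduce to the Wronskian brackets of
1, 2x, x², which are (up to sign) the brackets of the vector fields ∂ₓ, 2x∂ₓ, x²∂ₓ on the line.
-/

theorem pdx_eq_deriv {f : ℝ × ℝ → ℝ} {p : ℝ × ℝ} (hf : DifferentiableAt ℝ f p) :
    pdx f p = deriv (fun x => f (x, p.2)) p.1 :=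
  ((hf.hasFDerivAt.comp_hasDerivAt p.1
    ((hasDerivAt_id p.1).prodMk (hasDerivAt_const p.1 p.2))).deriv).symm

theorem pdy_eq_deriv {f : ℝ × ℝ → ℝ} {p : ℝ × ℝ} (hf : DifferentiableAt ℝ f p) :
    pdy f p = deriv (fun y => f (p.1, y)) p.2 :=
  ((hf.hasFDerivAt.comp_hasDerivAt p.2
    ((hasDerivAt_const p.2 p.1).prodMk (hasDerivAt_id p.2))).deriv).symm

theorem hasDerivAt_neg_const_div_two_mul_sq (c : ℝ) {y : ℝ} (hy : y ≠ 0) :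
    HasDerivAt (fun y => -(c / (2 * y ^ 2))) (c / y ^ 3) y := by
  refine ((hasDerivAt_const y c).fun_div ((hasDerivAt_pow 2 y).const_mul 2)
    (by positivity)).fun_neg.congr_deriv ?_
  field_simp
  ring

noncomputable def hamiltonianOf (P : ℝ → ℝ) : ℝ × ℝ → ℝ := fun p => -(P p.1 / (2 * p.2 ^ 2))

section HamiltonianOf

variable {P Q : ℝ → ℝ} {P' Q' x y : ℝ}

theorem differentiableAt_hamiltonianOf (hP : DifferentiableAt ℝ P x) (hy : y ≠ 0) :
    DifferentiableAt ℝ (hamiltonianOf P) (x, y) := by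
  have hP₁ : DifferentiableAt ℝ (fun p : ℝ × ℝ => P p.1) (x, y) :=
    hP.comp (x, y) differentiableAt_fst
  unfold hamiltonianOf
  fun_prop (disch := positivity)

theorem pdx_hamiltonianOf (hP : HasDerivAt P P' x) (hy : y ≠ 0) :
    pdx (hamiltonianOf P) (x, y) = -(P' / (2 * y ^ 2)) := by
  rw [pdx_eq_deriv (differentiableAt_hamiltonianOf hP.differentiableAt hy)]
  exact (hP.div_const (2 * y ^ 2)).neg.deriv

theorem pdy_hamiltonianOf (hP : DifferentiableAt ℝ P x) (hy : y ≠ 0) :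
    pdy (hamiltonianOf P) (x, y) = P x / y ^ 3 := by
  rw [pdy_eq_deriv (differentiableAt_hamiltonianOf hP hy)]
  exact (hasDerivAt_neg_const_div_two_mul_sq (P x) hy).deriv

theorem pbw_hamiltonianOf (hP : HasDerivAt P P' x) (hQ : HasDerivAt Q Q' x) (hy : y ≠ 0) :
    pbw (hamiltonianOf P) (hamiltonianOf Q) (x, y) = -((P' * Q x - P x * Q') / (2 * y ^ 2)) := by
  rw [pbw, pdx_hamiltonianOf hP hy, pdx_hamiltonianOf hQ hy,
    pdy_hamiltonianOf hP.differentiableAt hy, pdy_hamiltonianOf hQ.differentiableAt hy]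
  field_simp
  ring

end HamiltonianOf

theorem h1_eq_hamiltonianOf : h1 = hamiltonianOf fun _ => 1 := rfl

theorem h2_eq_hamiltonianOf : h2 = hamiltonianOf fun x => 2 * x := by
  ext p
  rw [h2, hamiltonianOf, mul_div_mul_left _ _ (two_ne_zero' ℝ)]

theorem h3_eq_hamiltonianOf : h3 = hamiltonianOf fun x => x ^ 2 := rfl

/-- On {y > 0}, the fields X₁, X₂, X₃ of I₅ (sl(2) of type III) are Hamiltonian with
respect to ω = y⁻³ dx∧dy with Hamiltonian functions h₁, h₂, h₃, which close sl(2)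
under the induced Poisson bracket. -/
theorem stmt_10 : ∀ p ∈ U,
    (pdx h1 p = -((p.2 ^ 3)⁻¹ * (X1 p).2) ∧ pdy h1 p = (p.2 ^ 3)⁻¹ * (X1 p).1) ∧
    (pdx h2 p = -((p.2 ^ 3)⁻¹ * (X2 p).2) ∧ pdy h2 p = (p.2 ^ 3)⁻¹ * (X2 p).1) ∧
    (pdx h3 p = -((p.2 ^ 3)⁻¹ * (X3 p).2) ∧ pdy h3 p = (p.2 ^ 3)⁻¹ * (X3 p).1) ∧
    pbw h1 h2 p = -2 * h1 p ∧ pbw h1 h3 p = -h2 p ∧ pbw h2 h3 p = -2 * h3 p := by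
  rintro ⟨x, y⟩ hp
  have hy : y ≠ 0 := (show 0 < y from hp).ne'
  have d1 : HasDerivAt (fun _ => (1 : ℝ)) 0 x := hasDerivAt_const x 1
  have d2 : HasDerivAt (fun x : ℝ => 2 * x) 2 x := by simpa using (hasDerivAt_id x).const_mul 2
  have d3 : HasDerivAt (fun x : ℝ => x ^ 2) (2 * x) x := by simpa using hasDerivAt_pow 2 x
  rw [h1_eq_hamiltonianOf, h2_eq_hamiltonianOf, h3_eq_hamiltonianOf]
  simp only [pdx_hamiltonianOf d1 hy, pdx_hamiltonianOf d2 hy, pdx_hamiltonianOf d3 hy,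
    pdy_hamiltonianOf d1.differentiableAt hy, pdy_hamiltonianOf d2.differentiableAt hy,
    pdy_hamiltonianOf d3.differentiableAt hy, pbw_hamiltonianOf d1 d2 hy,
    pbw_hamiltonianOf d1 d3 hy, pbw_hamiltonianOf d2 d3 hy, hamiltonianOf, X1, X2, X3]
  refine ⟨⟨?_, ?_⟩, ⟨?_, ?_⟩, ⟨?_, ?_⟩, ?_, ?_, ?_⟩ <;> field_simp <;> ring

end Stmt10
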